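/- Let X be a finite-dimensional real vector space, K ⊂ X a convex body with 0 in its interior, and Ψ the Minkowski norm (gauge) associated to K. Let L : X → X be a linear map with tr L = 0 such that ∂⁺_xΨ(L(x)) ≤ 0 for all x ∈ X. Then e^{tL}(K) = K for all t ∈ ℝ. -/

import Mathlib

/-!
The flow `e^{tL}` has determinant `e^{t tr L} = 1`, so it preserves volume. The hypothesis on
the right derivatives of the gauge `Ψ` along `L` makes `t ↦ Ψ(e^{tL} x)` non-increasing, hence
`e^{tL} K ⊆ K` for `t ≥ 0`. A volume-preserving linear map sending the compact convex body `K`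
into itself must map it onto `K`, since `K \ e^{tL} K` would contain an open set. Negative times
follow by inverting `e^{-tL}`.
-/

open Filter Topology NormedSpace Set

namespace Matrix

variable {𝕜 n : Type*} [NontriviallyNormedField 𝕜] [Fintype n] [DecidableEq n]

theorem det_updateRow_one (i : n) (v : n → 𝕜) :
    ((1 : Matrix n n 𝕜).updateRow i v).det = v i := by
  have hv : v = ∑ k, v k • (1 : Matrix n n 𝕜) k := by
    ext j; simp [Matrix.one_apply]
  conv_lhs => rw [hv, det_updateRow_sum, det_one, smul_eq_mul, mul_one]

def detContinuousMultilinearMap : ContinuousMultilinearMap 𝕜 (fun _ : n => n → 𝕜) 𝕜 :=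
  { (detRowAlternating : (n → 𝕜) [⋀^n]→ₗ[𝕜] 𝕜).toMultilinearMap with
    cont := continuous_id.matrix_det }

/-- Jacobi's formula at the identity, via the derivative of `det` as a multilinear map of the rows.
`M` takes values in the normed space `n → n → 𝕜`, whose own `1` is the all-ones function:
the hypothesis `h1` is about the identity matrix. -/
theorem hasDerivAt_det_of_eq_one {M : 𝕜 → n → n → 𝕜} {M' : n → n → 𝕜} {a : 𝕜}
    (hM : HasDerivAt M M' a) (h1 : M a = (1 : Matrix n n 𝕜)) :
    HasDerivAt (fun s => det (M s)) (trace M') a := by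
  refine (detContinuousMultilinearMap.hasFDerivAt (M a) |>.comp_hasDerivAt a hM).congr_deriv ?_
  rw [ContinuousMultilinearMap.linearDeriv_apply, h1]
  exact Finset.sum_congr rfl fun i _ => det_updateRow_one i (M' i)

end Matrix

theorem hasDerivAt_of_map_add_eq_mul {φ : ℝ → ℝ} {c : ℝ} (hadd : ∀ u v, φ (u + v) = φ u * φ v)
    (hc : HasDerivAt φ c 0) (s : ℝ) : HasDerivAt φ (φ s * c) s :=
  ((HasDerivAt.comp_sub_const s s (by rwa [sub_self])).const_mul (φ s)).congr_of_eventuallyEq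
    (Eventually.of_forall fun x => show φ x = φ s * φ (x - s) by rw [← hadd, add_sub_cancel])

theorem eq_exp_of_map_add_eq_mul {φ : ℝ → ℝ} {c : ℝ} (hadd : ∀ u v, φ (u + v) = φ u * φ v)
    (h0 : φ 0 = 1) (hc : HasDerivAt φ c 0) (t : ℝ) : φ t = Real.exp (c * t) := by
  set ψ : ℝ → ℝ := fun x => φ x * Real.exp (-(c * x))
  have hψ : ∀ x, HasDerivAt ψ 0 x := fun x =>
    ((hasDerivAt_of_map_add_eq_mul hadd hc x).mul
      (((hasDerivAt_id x).const_mul c).neg.exp)).congr_deriv (by simp only [id]; ring)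
  have hconst : ψ t = ψ 0 := is_const_of_deriv_eq_zero (fun x => (hψ x).differentiableAt)
    (fun x => (hψ x).deriv) t 0
  simp only [ψ, h0, mul_zero, Real.exp_zero, Real.exp_neg] at hconst
  field_simp at hconst
  exact hconst

section ExpSmul

variable {E : Type*} [NormedAddCommGroup E] [NormedSpace ℝ E] [CompleteSpace E]

theorem exp_add_smul (T : E →L[ℝ] E) (u v : ℝ) :
    exp ((u + v) • T) = exp (u • T) * exp (v • T) := by
  rw [add_smul]
  exact exp_add_of_commute_of_mem_ball (𝕂 := ℝ) ((Commute.refl T).smul_left u |>.smul_right v)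
    (by simp [expSeries_radius_eq_top]) (by simp [expSeries_radius_eq_top])

theorem exp_smul_apply_exp_neg_smul_apply (T : E →L[ℝ] E) (t : ℝ) (x : E) :
    exp (t • T) (exp (-t • T) x) = x := by
  rw [← mul_apply_eq_comp, ← exp_add_smul, add_neg_cancel, zero_smul, exp_zero,
    one_apply_eq_self]

theorem hasDerivAt_exp_smul_apply (T : E →L[ℝ] E) (x : E) (t : ℝ) :
    HasDerivAt (fun s : ℝ => exp (s • T) x) (T (exp (t • T) x)) t :=
  (ContinuousLinearMap.apply ℝ E x).hasFDerivAt.comp_hasDerivAt t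
    (hasDerivAt_exp_smul_const' T t)

variable [FiniteDimensional ℝ E]

theorem hasDerivAt_det_exp_smul_zero (T : E →L[ℝ] E) :
    HasDerivAt (fun s : ℝ => LinearMap.det ((exp (s • T) : E →L[ℝ] E) : E →ₗ[ℝ] E))
      (LinearMap.trace ℝ E T) 0 := by
  let b := Module.finBasis ℝ E
  let toMatrix : (E →L[ℝ] E) →L[ℝ] Fin (Module.finrank ℝ E) → Fin (Module.finrank ℝ E) → ℝ :=
    LinearMap.toContinuousLinearMap
      ((LinearMap.toMatrix b b).toLinearMap ∘ₗ ContinuousLinearMap.coeLM ℝ)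
  have hM := toMatrix.hasFDerivAt.comp_hasDerivAt (0 : ℝ) (hasDerivAt_exp_smul_const' T (0 : ℝ))
  rw [zero_smul, exp_zero, mul_one] at hM
  have h1 : toMatrix (exp ((0 : ℝ) • T)) = (1 : Matrix _ _ ℝ) := by
    rw [zero_smul, exp_zero]
    exact LinearMap.toMatrix_id b
  exact ((Matrix.hasDerivAt_det_of_eq_one hM h1).congr_deriv
    (LinearMap.trace_eq_matrix_trace ℝ b _).symm).congr_of_eventuallyEq
    (Eventually.of_forall fun s => (LinearMap.det_toMatrix b _).symm)

theorem det_exp_smul (T : E →L[ℝ] E) (t : ℝ) :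
    LinearMap.det ((exp (t • T) : E →L[ℝ] E) : E →ₗ[ℝ] E) =
      Real.exp (LinearMap.trace ℝ E T * t) := by
  refine eq_exp_of_map_add_eq_mul (fun u v => ?_) ?_ (hasDerivAt_det_exp_smul_zero T) t
  · rw [exp_add_smul, ContinuousLinearMap.mul_def, ContinuousLinearMap.toLinearMap_comp,
      LinearMap.det_comp]
  · simp [ContinuousLinearMap.one_def]

end ExpSmul

theorem LipschitzWith.tendsto_slope_comp {E : Type*} [NormedAddCommGroup E] [NormedSpace ℝ E]
    {g : E → ℝ} {C : NNReal} (hg : LipschitzWith C g) {u : ℝ → E} {v : E} {a d : ℝ}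
    (hu : HasDerivAt u v a)
    (hd : Tendsto (fun s : ℝ => (g (u a + s • v) - g (u a)) / s) (𝓝[>] 0) (𝓝 d)) :
    Tendsto (slope (g ∘ u) a) (𝓝[>] a) (𝓝 d) := by
  have herr : (fun z => g (u z) - g (u a + (z - a) • v)) =o[𝓝 a] fun z => z - a := by
    refine Asymptotics.IsBigO.trans_isLittleO (Asymptotics.IsBigO.of_bound C
      (Eventually.of_forall fun z => ?_)) (hasDerivAt_iff_isLittleO.1 hu)
    rw [← dist_eq_norm, sub_sub, ← dist_eq_norm]
    exact hg.dist_le_mul _ _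
  have hshift : Tendsto (fun z => z - a) (𝓝[>] a) (𝓝[>] 0) :=
    tendsto_nhdsWithin_iff.2
      ⟨tendsto_sub_nhds_zero_iff.2 (tendsto_id.mono_left nhdsWithin_le_nhds),
        eventually_mem_nhdsWithin.mono fun z hz => mem_Ioi.2 (sub_pos.2 hz)⟩
  have hsum := (hd.comp hshift).add (herr.tendsto_div_nhds_zero.mono_left nhdsWithin_le_nhds)
  rw [add_zero] at hsum
  refine hsum.congr' (eventually_mem_nhdsWithin.mono fun z hz => ?_)
  have hz' : z - a ≠ 0 := sub_ne_zero.2 (ne_of_gt hz)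
  simp only [Function.comp_apply, slope_def_field]
  field_simp
  ring

theorem le_of_tendsto_slope_right_nonpos {f : ℝ → ℝ} {a b : ℝ} (hab : a ≤ b)
    (hf : ContinuousOn f (Icc a b))
    (hslope : ∀ x ∈ Ico a b, ∃ d ≤ 0, Tendsto (slope f x) (𝓝[>] x) (𝓝 d)) : f b ≤ f a :=
  image_le_of_liminf_slope_right_le_deriv_boundary (B := fun _ => f a) hf le_rfl continuousOn_const
    (fun x _ => hasDerivWithinAt_const x _ _)
    (fun x hx _ hr => by
      obtain ⟨d, hd, h⟩ := hslope x hx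
      exact (h.eventually_lt_const (hd.trans_lt hr)).frequently)
    ⟨hab, le_rfl⟩

theorem LipschitzWith.apply_exp_smul_apply_le {E : Type*} [NormedAddCommGroup E] [NormedSpace ℝ E]
    [CompleteSpace E] {g : E → ℝ} {C : NNReal} (hg : LipschitzWith C g) (T : E →L[ℝ] E)
    (hdir : ∀ x, ∃ d ≤ 0, Tendsto (fun s : ℝ => (g (x + s • T x) - g x) / s) (𝓝[>] 0) (𝓝 d))
    (x : E) {t : ℝ} (ht : 0 ≤ t) : g (exp (t • T) x) ≤ g x := by
  have hflow := hasDerivAt_exp_smul_apply T x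
  simpa [exp_zero] using le_of_tendsto_slope_right_nonpos ht
    (hg.continuous.comp_continuousOn fun s _ => (hflow s).continuousAt.continuousWithinAt)
    fun s _ => let ⟨d, hd, h⟩ := hdir (exp (s • T) x); ⟨d, hd, hg.tendsto_slope_comp (hflow s) h⟩

open MeasureTheory in
theorem IsClosed.eq_of_subset_of_measure_eq {α : Type*} [TopologicalSpace α] [MeasurableSpace α]
    [OpensMeasurableSpace α] {μ : Measure α} [μ.IsOpenPosMeasure] {A K : Set α} (hA : IsClosed A)
    (hAK : A ⊆ K) (hK : K ⊆ closure (interior K)) (hμ : μ A = μ K) (hfin : μ K ≠ ⊤) : A = K := by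
  refine hAK.antisymm fun z hz => by_contra fun hzA => ?_
  obtain ⟨w, hw⟩ : (Aᶜ ∩ interior K).Nonempty :=
    mem_closure_iff.1 (hK hz) Aᶜ hA.isOpen_compl hzA
  have hpos : 0 < μ (Aᶜ ∩ interior K) :=
    (hA.isOpen_compl.inter isOpen_interior).measure_pos μ ⟨w, hw⟩
  have hnull : μ (K \ A) = 0 := by
    rw [measure_sdiff hAK hA.nullMeasurableSet (hμ ▸ hfin), hμ, tsub_self]
  have hsub : Aᶜ ∩ interior K ⊆ K \ A := fun y hy => ⟨interior_subset hy.2, hy.1⟩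
  exact hpos.ne' (measure_mono_null hsub hnull)

open MeasureTheory in
theorem ContinuousLinearMap.image_eq_of_image_subset_of_abs_det_eq_one {E : Type*}
    [NormedAddCommGroup E] [NormedSpace ℝ E] [FiniteDimensional ℝ E] (f : E →L[ℝ] E)
    (hdet : |LinearMap.det (f : E →ₗ[ℝ] E)| = 1) {K : Set E} (hK : IsCompact K)
    (hKint : K ⊆ closure (interior K)) (hfK : f '' K ⊆ K) : f '' K = K := by
  borelize E
  refine (hK.image f.continuous).isClosed.eq_of_subset_of_measure_eq (μ := Measure.addHaar)
    hfK hKint ?_ hK.measure_lt_top.ne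
  rw [Measure.addHaar_image_continuousLinearMap, hdet, ENNReal.ofReal_one, one_mul]

/-- **Lemma.**  Let `K ⊂ X` be a convex body with `0` in its interior and `Ψ = gauge K` its
Minkowski norm.  Let `L : X → X` be a linear map with `tr L = 0` such that the one-sided
directional derivative `∂⁺ₓΨ(L x) = lim_{s↓0} (Ψ(x + s • L x) - Ψ(x))/s` is `≤ 0` for every
`x ∈ X`.  Then `e^{tL}(K) = K` for all `t ∈ ℝ`. -/
theorem exp_preserves_body
    {X : Type*} [NormedAddCommGroup X] [NormedSpace ℝ X] [FiniteDimensional ℝ X]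
    (K : Set X) (hKcomp : IsCompact K) (hKconv : Convex ℝ K)
    (h0 : (0 : X) ∈ interior K)
    (L : X →ₗ[ℝ] X)
    (htr : LinearMap.trace ℝ X L = 0)
    (hdir : ∀ x : X, ∃ d : ℝ, d ≤ 0 ∧
      Tendsto (fun s : ℝ => (gauge K (x + s • L x) - gauge K x) / s) (𝓝[>] 0) (𝓝 d)) :
    ∀ t : ℝ, (NormedSpace.exp (t • L.toContinuousLinearMap) : X →L[ℝ] X) '' K = K := by
  set T := L.toContinuousLinearMap
  have hK0 : K ∈ 𝓝 (0 : X) := mem_interior_iff_mem_nhds.1 h0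
  obtain ⟨C, hC⟩ := hKconv.lipschitz_gauge hK0
  have hsub : ∀ s : ℝ, 0 ≤ s → (exp (s • T) : X →L[ℝ] X) '' K ⊆ K := by
    rintro s hs _ ⟨x, hx, rfl⟩
    rw [← hKcomp.isClosed.closure_eq, ← gauge_le_one_iff_mem_closure hKconv hK0]
    exact (hC.apply_exp_smul_apply_le T hdir x hs).trans (gauge_le_one_of_mem hx)
  have hKint : K ⊆ closure (interior K) := by
    rw [hKconv.closure_interior_eq_closure_of_nonempty_interior ⟨0, h0⟩]
    exact subset_closure
  have hfix : ∀ s : ℝ, 0 ≤ s → (exp (s • T) : X →L[ℝ] X) '' K = K := fun s hs =>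
    (exp (s • T)).image_eq_of_image_subset_of_abs_det_eq_one
      (by rw [det_exp_smul, LinearMap.coe_toContinuousLinearMap, htr]; simp) hKcomp hKint
      (hsub s hs)
  intro t
  rcases le_total 0 t with ht | ht
  · exact hfix t ht
  · conv_lhs => rw [← hfix (-t) (neg_nonneg.2 ht), image_image]
    simp only [exp_smul_apply_exp_neg_smul_apply, image_id']
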